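/- arXiv:2604.00855 — 6 statements merged into one kernel-verified Lean document; each statement's English description precedes it below -/
import Mathlib

section
/- Let E be a real normed vector space (in fact any type with addition and subtraction suffices), 𝒢, ℱ : E → E, and u₀ ∈ E. Let U⁰ : ℕ → E be any initial sequence with U⁰(0) = u₀, and define the Parareal iterates for k ≥ 1 by U^k(0) = u₀ and U^k(n) = 𝒢(U^k(n−1)) + ℱ(U^{k−1}(n−1)) − 𝒢(U^{k−1}(n−1)) for n ≥ 1. Then for all k ≥ 0 and all n ≤ k, U^k(n) = ℱ^[n](u₀), i.e. after k iterations the first k interface values coincide exactly with the fine solution. -/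
/-! The correction `F x - G x` cancels the coarse prediction `G x` as soon as the coarse step
is evaluated at an exact value, so by induction on `n` the value `U k n` is exact whenever the
two values `U k (n - 1)` and `U (k - 1) (n - 1)` it is built from are. -/

theorem parareal_eq_iterate_of_le {E : Type*} [AddCommGroup E]
    (F G : E → E) (u₀ : E) (U : ℕ → ℕ → E)
    (h0 : ∀ k, U k 0 = u₀)
    (hrec : ∀ k n, U (k + 1) (n + 1) = G (U (k + 1) n) + F (U k n) - G (U k n)) :
    ∀ n k, n ≤ k → U k n = F^[n] u₀ := by
  intro n
  induction n with
  | zero => exact fun k _ => h0 k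
  | succ n ih =>
    rintro (_ | k) hn
    · omega
    have hnew : U (k + 1) n = F^[n] u₀ := ih (k + 1) (by omega)
    have hold : U k n = F^[n] u₀ := ih k (by omega)
    rw [hrec, hnew, hold, add_sub_cancel_left, Function.iterate_succ_apply']

theorem parareal_finite_termination_general
    {E : Type*} [NormedAddCommGroup E]
    (F G : E → E) (u₀ : E) (U : ℕ → ℕ → E)
    (h0 : ∀ k : ℕ, U k 0 = u₀)
    (hrec : ∀ k n : ℕ, U (k + 1) (n + 1) = G (U (k + 1) n) + F (U k n) - G (U k n)) :
    ∀ k n : ℕ, n ≤ k → U k n = F^[n] u₀ :=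
  fun k n hn => parareal_eq_iterate_of_le F G u₀ U h0 hrec n k hn

/-- Finite termination of Parareal: after `k` iterations the first `k`
interface values coincide exactly with the fine solution `ℱ^[n](u₀)`, regardless of
the initial guess and of the coarse propagator `𝒢`. -/
theorem parareal_finite_termination
    {E : Type*} [NormedAddCommGroup E] [NormedSpace ℝ E]
    (F G : E → E) (u₀ : E) (U : ℕ → ℕ → E)
    (h0 : ∀ k : ℕ, U k 0 = u₀)
    (hrec : ∀ k n : ℕ, U (k + 1) (n + 1) = G (U (k + 1) n) + F (U k n) - G (U k n)) :
    ∀ k n : ℕ, n ≤ k → U k n = F^[n] u₀ :=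
  parareal_finite_termination_general F G u₀ U h0 hrec
end

section
/- Let E be a real normed vector space, 𝒢, ℱ : E → E, u₀ ∈ E, and suppose ‖𝒢(x) − 𝒢(y)‖ ≤ γ‖x − y‖ and ‖(ℱ(x) − 𝒢(x)) − (ℱ(y) − 𝒢(y))‖ ≤ δ‖x − y‖ for all x, y ∈ E. Let U⁰ : ℕ → E satisfy U⁰(0) = u₀ and define the Parareal iterates for k ≥ 1 by U^k(0) = u₀ and U^k(n) = 𝒢(U^k(n−1)) + ℱ(U^{k−1}(n−1)) − 𝒢(U^{k−1}(n−1)) for n ≥ 1. Let U*(n) = ℱ^[n](u₀). Then for all k ≥ 1 and n ≥ 1, ‖U^k(n) − U*(n)‖ ≤ γ‖U^k(n−1) − U*(n−1)‖ + δ‖U^{k−1}(n−1) − U*(n−1)‖. -/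
theorem norm_parareal_update_sub_le {E : Type*} [SeminormedAddCommGroup E] {F G : E → E}
    {γ δ : ℝ} (hG : ∀ x y : E, ‖G x - G y‖ ≤ γ * ‖x - y‖)
    (hFG : ∀ x y : E, ‖(F x - G x) - (F y - G y)‖ ≤ δ * ‖x - y‖) (a b c d : E) :
    ‖(G a + F b - G b) - (G c + F d - G d)‖ ≤ γ * ‖a - c‖ + δ * ‖b - d‖ := by
  have hsplit : (G a + F b - G b) - (G c + F d - G d)
      = (G a - G c) + ((F b - G b) - (F d - G d)) := by abel
  calc ‖(G a + F b - G b) - (G c + F d - G d)‖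
      ≤ ‖G a - G c‖ + ‖(F b - G b) - (F d - G d)‖ := hsplit ▸ norm_add_le _ _
    _ ≤ γ * ‖a - c‖ + δ * ‖b - d‖ := add_le_add (hG a c) (hFG b d)

theorem iterate_succ_apply_eq_parareal_update {E : Type*} [AddCommGroup E] (F G : E → E)
    (u₀ : E) (n : ℕ) :
    F^[n + 1] u₀ = G (F^[n] u₀) + F (F^[n] u₀) - G (F^[n] u₀) := by
  rw [Function.iterate_succ_apply', add_sub_cancel_left]

theorem parareal_error_recursion_general
    {E : Type*} [NormedAddCommGroup E]
    (F G : E → E) (u₀ : E) (γ δ : ℝ)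
    (hG : ∀ x y : E, ‖G x - G y‖ ≤ γ * ‖x - y‖)
    (hFG : ∀ x y : E, ‖(F x - G x) - (F y - G y)‖ ≤ δ * ‖x - y‖)
    (U : ℕ → ℕ → E)
    (hrec : ∀ k n : ℕ, U (k + 1) (n + 1) = G (U (k + 1) n) + F (U k n) - G (U k n)) :
    ∀ k n : ℕ,
      ‖U (k + 1) (n + 1) - F^[n + 1] u₀‖
        ≤ γ * ‖U (k + 1) n - F^[n] u₀‖ + δ * ‖U k n - F^[n] u₀‖ := by
  intro k n
  rw [hrec, iterate_succ_apply_eq_parareal_update F G]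
  exact norm_parareal_update_sub_le hG hFG _ _ _ _

/-- One-step Parareal error recursion: the error of the `k`-th iterate at
chunk `n` is bounded by the transported previous-chunk error (factor `γ`, the Lipschitz
constant of the coarse solver) plus the fresh error source (factor `δ`, the Lipschitz
constant of the discrepancy `ℱ - 𝒢`). -/
theorem parareal_error_recursion
    {E : Type*} [NormedAddCommGroup E] [NormedSpace ℝ E]
    (F G : E → E) (u₀ : E) (γ δ : ℝ)
    (hG : ∀ x y : E, ‖G x - G y‖ ≤ γ * ‖x - y‖)
    (hFG : ∀ x y : E, ‖(F x - G x) - (F y - G y)‖ ≤ δ * ‖x - y‖)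
    (U : ℕ → ℕ → E)
    (h0 : ∀ k : ℕ, U k 0 = u₀)
    (hrec : ∀ k n : ℕ, U (k + 1) (n + 1) = G (U (k + 1) n) + F (U k n) - G (U k n)) :
    ∀ k n : ℕ,
      ‖U (k + 1) (n + 1) - F^[n + 1] u₀‖
        ≤ γ * ‖U (k + 1) n - F^[n] u₀‖ + δ * ‖U k n - F^[n] u₀‖ :=
  parareal_error_recursion_general F G u₀ γ δ hG hFG U hrec
end

section
/- Let E be a real normed vector space and J : ℝ → (E →L[ℝ] E) be Lipschitz continuous with constant ν ≥ 0 in the operator norm. Let h > 0, let ξ ≥ 1 and L ≥ 1 be natural numbers, and let t₀ ∈ ℝ. Then the difference between the fine-step and coarse-step Riemann sums of J satisfies ‖ h • Σ_{i=1}^{ξL} J(t₀ + (i−1)h) − (ξh) • Σ_{j=1}^{L} J(t₀ + (j−1)ξh) ‖ ≤ L · h² · ν · ξ(ξ−1)/2. -/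
/-!
Group the `ξ L` fine nodes into `L` blocks of `ξ`, block `j` starting at the `j`-th coarse node.
The `k`-th node of a block lies `k h` past the coarse node it replaces, so the Lipschitz bound
costs `ν k |h|` there, hence `ν |h| ξ(ξ-1)/2` per block; the common factor `h` and the `L`
blocks give the bound.
-/

open Finset

theorem Finset.sum_range_mul_eq_sum_sum {M : Type*} [AddCommMonoid M] (f : ℕ → M) (m n : ℕ) :
    ∑ i ∈ range (m * n), f i = ∑ j ∈ range n, ∑ k ∈ range m, f (m * j + k) := by
  induction n with
  | zero => simp
  | succ n ih => rw [Nat.mul_succ, sum_range_add, ih, sum_range_succ]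

theorem Finset.sum_range_natCast (n : ℕ) :
    ∑ k ∈ range n, (k : ℝ) = n * (n - 1) / 2 := by
  induction n with
  | zero => simp
  | succ n ih => rw [sum_range_succ, ih]; push_cast; ring

theorem norm_sum_range_sub_le_of_lipschitz {F : Type*} [SeminormedAddCommGroup F] (f : ℝ → F)
    (ν : ℝ) (hf : ∀ s t : ℝ, ‖f s - f t‖ ≤ ν * |s - t|) (a h : ℝ) (n : ℕ) :
    ‖∑ k ∈ range n, (f (a + k * h) - f a)‖ ≤ ν * |h| * (n * (n - 1) / 2) := by
  calc ‖∑ k ∈ range n, (f (a + k * h) - f a)‖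
      ≤ ∑ k ∈ range n, ν * |h| * k := by
        refine norm_sum_le_of_le _ fun k _ => (hf _ _).trans_eq ?_
        rw [add_sub_cancel_left, abs_mul, Nat.abs_cast]
        ring
    _ = ν * |h| * (n * (n - 1) / 2) := by rw [← mul_sum, sum_range_natCast]

theorem jacobian_riemann_sum_mismatch_general
    {E : Type*} [NormedAddCommGroup E] [NormedSpace ℝ E]
    (J : ℝ → (E →L[ℝ] E)) (ν : ℝ)
    (hJ : ∀ s t : ℝ, ‖J s - J t‖ ≤ ν * |s - t|)
    (h : ℝ) (ξ L : ℕ) (t₀ : ℝ) :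
    ‖h • ∑ i ∈ Finset.range (ξ * L), J (t₀ + i * h)
        - ((ξ : ℝ) * h) • ∑ j ∈ Finset.range L, J (t₀ + j * ((ξ : ℝ) * h))‖
      ≤ L * h ^ 2 * ν * ((ξ : ℝ) * ((ξ : ℝ) - 1) / 2) := by
  have hblocks : h • ∑ i ∈ range (ξ * L), J (t₀ + i * h)
        - ((ξ : ℝ) * h) • ∑ j ∈ range L, J (t₀ + j * ((ξ : ℝ) * h))
      = h • ∑ j ∈ range L, ∑ k ∈ range ξ,
          (J (t₀ + j * ((ξ : ℝ) * h) + k * h) - J (t₀ + j * ((ξ : ℝ) * h))) := by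
    have hnode (j k : ℕ) :
        t₀ + ((ξ * j + k : ℕ) : ℝ) * h = t₀ + j * ((ξ : ℝ) * h) + k * h := by
      push_cast; ring
    simp only [sum_range_mul_eq_sum_sum, hnode, sum_sub_distrib, sum_const, card_range, smul_sub,
      smul_sum, ← Nat.cast_smul_eq_nsmul ℝ, smul_smul, mul_comm h]
  rw [hblocks, norm_smul, Real.norm_eq_abs]
  calc |h| * ‖∑ j ∈ range L, ∑ k ∈ range ξ,
          (J (t₀ + j * ((ξ : ℝ) * h) + k * h) - J (t₀ + j * ((ξ : ℝ) * h)))‖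
      ≤ |h| * ∑ _j ∈ range L, ν * |h| * (ξ * (ξ - 1) / 2) := by
        gcongr
        exact norm_sum_le_of_le _ fun j _ => norm_sum_range_sub_le_of_lipschitz J ν hJ _ h ξ
    _ = L * h ^ 2 * ν * ((ξ : ℝ) * ((ξ : ℝ) - 1) / 2) := by
        rw [sum_const, card_range, nsmul_eq_mul, ← sq_abs h]
        ring

/-- First-order Jacobian mismatch `Δ₁` between the fine and coarse Riemann
sums: if `J` is Lipschitz with constant `ν` in the operator norm, then the difference
between the fine-step and coarse-step sums over one chunk of length `ΔT = Lξh` is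
bounded by `L h² ν ξ(ξ-1)/2`. -/
theorem jacobian_riemann_sum_mismatch
    {E : Type*} [NormedAddCommGroup E] [NormedSpace ℝ E]
    (J : ℝ → (E →L[ℝ] E)) (ν : ℝ) (hν : 0 ≤ ν)
    (hJ : ∀ s t : ℝ, ‖J s - J t‖ ≤ ν * |s - t|)
    (h : ℝ) (hh : 0 < h) (ξ L : ℕ) (hξ : 1 ≤ ξ) (hL : 1 ≤ L) (t₀ : ℝ) :
    ‖h • ∑ i ∈ Finset.range (ξ * L), J (t₀ + i * h)
        - ((ξ : ℝ) * h) • ∑ j ∈ Finset.range L, J (t₀ + j * ((ξ : ℝ) * h))‖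
      ≤ L * h ^ 2 * ν * ((ξ : ℝ) * ((ξ : ℝ) - 1) / 2) :=
  jacobian_riemann_sum_mismatch_general J ν hJ h ξ L t₀
end

section
/- Let E be a real normed vector space, ℱ : E → E Lipschitz with constant Λ ≥ 0, w > 0, θ = Λ/w, N ≥ 1, and u₀ ∈ E. Let U : Fin (N+1) → E be a sequence with U(0) = u₀, let U*(n) = ℱ^[n](u₀), and let d_n = ‖U(n) − ℱ(U(n−1))‖ for 1 ≤ n ≤ N. Then Σ_{n=1}^{N} w^{−n} d_n ≤ (1 + θ) · Σ_{n=1}^{N} w^{−n} ‖U(n) − U*(n)‖. -/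
/-!
Write `eₙ = ‖U(n) − ℱ^[n] u₀‖`. The triangle inequality through `ℱ(U*(n−1))` and the Lipschitz
bound give `dₙ ≤ eₙ + Λ eₙ₋₁`; after weighting, `w^{-n} Λ eₙ₋₁ = θ · w^{-(n-1)} eₙ₋₁`, and since
`e₀ = 0` the shifted weighted errors sum to at most the unshifted ones.
-/

open Finset

theorem Fin.sum_castSucc_le_sum_succ {M : Type*} [AddCommMonoid M] [PartialOrder M]
    [IsOrderedAddMonoid M] {N : ℕ} (g : Fin (N + 1) → M) (h0 : g 0 = 0)
    (hlast : 0 ≤ g (Fin.last N)) :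
    ∑ i : Fin N, g i.castSucc ≤ ∑ i : Fin N, g i.succ :=
  calc ∑ i : Fin N, g i.castSucc ≤ ∑ i : Fin N, g i.castSucc + g (Fin.last N) :=
        le_add_of_nonneg_right hlast
    _ = g 0 + ∑ i : Fin N, g i.succ := by rw [← Fin.sum_univ_castSucc, Fin.sum_univ_succ]
    _ = ∑ i : Fin N, g i.succ := by rw [h0, zero_add]

section Lipschitz

variable {E : Type*} [SeminormedAddCommGroup E] {F : E → E} {Λ : ℝ}

theorem norm_sub_map_le_of_lipschitz (hF : ∀ x y : E, ‖F x - F y‖ ≤ Λ * ‖x - y‖)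
    (a b c : E) : ‖a - F b‖ ≤ ‖a - F c‖ + Λ * ‖b - c‖ :=
  calc ‖a - F b‖ ≤ ‖a - F c‖ + ‖F c - F b‖ := norm_sub_le_norm_sub_add_norm_sub _ _ _
    _ ≤ ‖a - F c‖ + Λ * ‖b - c‖ := by
        rw [norm_sub_rev (F c)]
        exact add_le_add_right (hF b c) _

theorem zpow_weight_mul_norm_sub_map_le (hF : ∀ x y : E, ‖F x - F y‖ ≤ Λ * ‖x - y‖)
    {w : ℝ} (hw : 0 < w) (k : ℕ) (a b c : E) :
    w ^ (-(k + 1 : ℤ)) * ‖a - F b‖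
      ≤ w ^ (-(k + 1 : ℤ)) * ‖a - F c‖ + Λ / w * (w ^ (-(k : ℤ)) * ‖b - c‖) := by
  have hweight : w ^ (-(k + 1 : ℤ)) * Λ = Λ / w * w ^ (-(k : ℤ)) := by
    rw [neg_add, zpow_add₀ hw.ne', zpow_neg_one]
    ring
  calc w ^ (-(k + 1 : ℤ)) * ‖a - F b‖
      ≤ w ^ (-(k + 1 : ℤ)) * (‖a - F c‖ + Λ * ‖b - c‖) := by
        gcongr
        exact norm_sub_map_le_of_lipschitz hF a b c
    _ = _ := by rw [mul_add, ← mul_assoc, hweight, mul_assoc]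

end Lipschitz

theorem proximity_lower_bound_general
    {E : Type*} [NormedAddCommGroup E]
    (F : E → E) (Λ : ℝ) (hΛ : 0 ≤ Λ)
    (hF : ∀ x y : E, ‖F x - F y‖ ≤ Λ * ‖x - y‖)
    (w : ℝ) (hw : 0 < w) (θ : ℝ) (hθ : θ = Λ / w)
    (N : ℕ) (u₀ : E)
    (U : Fin (N + 1) → E) (hU0 : U 0 = u₀) :
    ∑ n : Fin N, w ^ (-(n.val + 1 : ℤ)) * ‖U n.succ - F (U n.castSucc)‖
      ≤ (1 + θ) * ∑ n : Fin N, w ^ (-(n.val + 1 : ℤ)) * ‖U n.succ - F^[n.val + 1] u₀‖ := by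
  set g : Fin (N + 1) → ℝ := fun n => w ^ (-(n.val : ℤ)) * ‖U n - F^[n.val] u₀‖
  have hθ0 : 0 ≤ θ := hθ ▸ div_nonneg hΛ hw.le
  have hg0 : g 0 = 0 := by simp [g, hU0]
  have hstep (n : Fin N) :
      w ^ (-(n.val + 1 : ℤ)) * ‖U n.succ - F (U n.castSucc)‖ ≤ g n.succ + θ * g n.castSucc := by
    have := zpow_weight_mul_norm_sub_map_le hF hw n (U n.succ) (U n.castSucc) (F^[n.val] u₀)
    rwa [← Function.iterate_succ_apply' F, ← hθ] at this
  calc ∑ n : Fin N, w ^ (-(n.val + 1 : ℤ)) * ‖U n.succ - F (U n.castSucc)‖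
      ≤ ∑ n : Fin N, (g n.succ + θ * g n.castSucc) := sum_le_sum fun n _ => hstep n
    _ = ∑ n : Fin N, g n.succ + θ * ∑ n : Fin N, g n.castSucc := by
        rw [sum_add_distrib, mul_sum]
    _ ≤ ∑ n : Fin N, g n.succ + θ * ∑ n : Fin N, g n.succ := by
        have hshift := Fin.sum_castSucc_le_sum_succ g hg0 (by positivity)
        gcongr
    _ = (1 + θ) * ∑ n : Fin N, w ^ (-(n.val + 1 : ℤ)) * ‖U n.succ - F^[n.val + 1] u₀‖ := by
        simp only [g, Fin.val_succ, Nat.cast_add, Nat.cast_one]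
        ring

/-- Lower-bound half of the norm-equivalence theorem for the proximity
function: the weighted sum of interface jumps is bounded by `(1 + θ)` times the
weighted trajectory error, where `θ = Λ/w` is the stability ratio. -/
theorem proximity_lower_bound
    {E : Type*} [NormedAddCommGroup E] [NormedSpace ℝ E]
    (F : E → E) (Λ : ℝ) (hΛ : 0 ≤ Λ)
    (hF : ∀ x y : E, ‖F x - F y‖ ≤ Λ * ‖x - y‖)
    (w : ℝ) (hw : 0 < w) (θ : ℝ) (hθ : θ = Λ / w)
    (N : ℕ) (hN : 1 ≤ N) (u₀ : E)
    (U : Fin (N + 1) → E) (hU0 : U 0 = u₀) :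
    ∑ n : Fin N, w ^ (-(n.val + 1 : ℤ)) * ‖U n.succ - F (U n.castSucc)‖
      ≤ (1 + θ) * ∑ n : Fin N, w ^ (-(n.val + 1 : ℤ)) * ‖U n.succ - F^[n.val + 1] u₀‖ :=
  proximity_lower_bound_general F Λ hΛ hF w hw θ hθ N u₀ U hU0
end

section
/- Let E be a real normed vector space, ℱ : E → E Lipschitz with constant Λ ≥ 0, w > 0, θ = Λ/w, N ≥ 1, and u₀ ∈ E. Let U : Fin (N+1) → E be a sequence with U(0) = u₀, let U*(n) = ℱ^[n](u₀), and let d_n = ‖U(n) − ℱ(U(n−1))‖ for 1 ≤ n ≤ N. Then Σ_{n=1}^{N} w^{−n} ‖U(n) − U*(n)‖ ≤ (Σ_{m=0}^{N−1} θ^m) · Σ_{j=1}^{N} w^{−j} d_j, where the geometric factor Σ_{m=0}^{N−1} θ^m equals (θ^N − 1)/(θ − 1) when θ ≠ 1 and equals N when θ = 1. -/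
/-!
The weighted errors `εₙ = w⁻ⁿ ‖U n - ℱ^[n] u₀‖` satisfy `εₙ₊₁ ≤ θ εₙ + δₙ₊₁`, where `δₙ` is the
weighted jump at `n`: the triangle inequality through `ℱ (U n)` plus the Lipschitz bound, with
the factor `Λ` absorbed by one power of the weight. Since `ε₀ = 0`, discrete Grönwall gives
`εₖ₊₁ ≤ ∑_{j ≤ k} θ^(k-j) δⱼ₊₁`; summing over `k < N` and exchanging the two sums multiplies
each jump by a partial geometric sum of at most `N` terms.
-/

open Finset

section GeometricGronwall

variable {R : Type*} [CommSemiring R] [PartialOrder R] [IsOrderedRing R]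
  {e d : ℕ → R} {θ : R}

theorem le_sum_range_pow_mul_of_le_mul_add (hθ : 0 ≤ θ) (he₀ : e 0 ≤ 0)
    (hstep : ∀ n, e (n + 1) ≤ θ * e n + d n) (n : ℕ) :
    e (n + 1) ≤ ∑ j ∈ range (n + 1), θ ^ (n - j) * d j := by
  have h := discrete_gronwall_prod_general (c := fun _ ↦ θ) (fun n _ ↦ hstep n)
    (fun _ _ ↦ hθ) (Nat.zero_le (n + 1))
  simp only [prod_const, ← range_eq_Ico, card_range, Nat.card_Ico, Nat.add_sub_add_right,
    mul_comm (d _)] at h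
  have he₀θ : e 0 * θ ^ (n + 1) ≤ 0 := mul_nonpos_of_nonpos_of_nonneg he₀ (pow_nonneg hθ _)
  exact h.trans (add_le_of_nonpos_left he₀θ)

theorem sum_range_succ_le_sum_pow_mul_sum (hθ : 0 ≤ θ) (hd : ∀ n, 0 ≤ d n) (he₀ : e 0 ≤ 0)
    (hstep : ∀ n, e (n + 1) ≤ θ * e n + d n) (N : ℕ) :
    ∑ n ∈ range N, e (n + 1) ≤ (∑ m ∈ range N, θ ^ m) * ∑ n ∈ range N, d n :=
  calc ∑ n ∈ range N, e (n + 1)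
      ≤ ∑ n ∈ range N, ∑ j ∈ range (n + 1), θ ^ (n - j) * d j :=
        sum_le_sum fun n _ ↦ le_sum_range_pow_mul_of_le_mul_add hθ he₀ hstep n
    _ = ∑ j ∈ range N, (∑ m ∈ range (N - j), θ ^ m) * d j := by
        rw [sum_range_diag_flip N fun j m ↦ θ ^ m * d j]
        simp only [sum_mul]
    _ ≤ ∑ j ∈ range N, (∑ m ∈ range N, θ ^ m) * d j := by
        gcongr with j
        exacts [hd j, N.sub_le j]
    _ = (∑ m ∈ range N, θ ^ m) * ∑ n ∈ range N, d n := (mul_sum ..).symm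

end GeometricGronwall

theorem norm_sub_iterate_succ_le {E : Type*} [SeminormedAddCommGroup E] {F : E → E} {Λ : ℝ}
    (hF : ∀ x y : E, ‖F x - F y‖ ≤ Λ * ‖x - y‖) (u x y : E) (k : ℕ) :
    ‖y - F^[k + 1] u‖ ≤ Λ * ‖x - F^[k] u‖ + ‖y - F x‖ := by
  rw [Function.iterate_succ_apply']
  calc ‖y - F (F^[k] u)‖ ≤ ‖y - F x‖ + ‖F x - F (F^[k] u)‖ :=
        norm_sub_le_norm_sub_add_norm_sub _ _ _
    _ ≤ Λ * ‖x - F^[k] u‖ + ‖y - F x‖ := by linarith [hF x (F^[k] u)]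

theorem proximity_upper_bound_general
    {E : Type*} [NormedAddCommGroup E] [NormedSpace ℝ E]
    (F : E → E) (Λ : ℝ) (hΛ : 0 ≤ Λ)
    (hF : ∀ x y : E, ‖F x - F y‖ ≤ Λ * ‖x - y‖)
    (w : ℝ) (hw : 0 < w) (θ : ℝ) (hθ : θ = Λ / w)
    (N : ℕ) (u₀ : E)
    (U : Fin (N + 1) → E) (hU0 : U 0 = u₀) :
    ∑ n : Fin N, w ^ (-(n.val + 1 : ℤ)) * ‖U n.succ - F^[n.val + 1] u₀‖
      ≤ (∑ m ∈ Finset.range N, θ ^ m) *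
        ∑ n : Fin N, w ^ (-(n.val + 1 : ℤ)) * ‖U n.succ - F (U n.castSucc)‖ := by
  set V : ℕ → E := fun k ↦ U (Fin.clamp k N)
  have hV : ∀ n : Fin N, U n.succ = V (n + 1) ∧ U n.castSucc = V n := fun n ↦
    ⟨congrArg U (Fin.ext (by simp)), congrArg U (Fin.ext (by simp))⟩
  have hweight : ∀ n : ℕ, w ^ (-(n + 1 : ℤ)) = w⁻¹ ^ (n + 1) := fun n ↦ by
    rw [inv_pow, ← zpow_natCast, ← zpow_neg]; push_cast; rfl
  have hstep : ∀ k : ℕ, w⁻¹ ^ (k + 1) * ‖V (k + 1) - F^[k + 1] u₀‖ ≤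
      θ * (w⁻¹ ^ k * ‖V k - F^[k] u₀‖) + w⁻¹ ^ (k + 1) * ‖V (k + 1) - F (V k)‖ := fun k ↦
    calc _ ≤ w⁻¹ ^ (k + 1) * (Λ * ‖V k - F^[k] u₀‖ + ‖V (k + 1) - F (V k)‖) := by
          gcongr; exact norm_sub_iterate_succ_le hF u₀ _ _ k
      _ = _ := by rw [hθ]; ring
  have hθ₀ : 0 ≤ θ := hθ ▸ div_nonneg hΛ hw.le
  have he₀ : w⁻¹ ^ 0 * ‖V 0 - F^[0] u₀‖ ≤ 0 := by
    simp [V, ← hU0, show Fin.clamp 0 N = 0 from Fin.ext (Nat.zero_min N)]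
  have hsum := sum_range_succ_le_sum_pow_mul_sum (e := fun k ↦ w⁻¹ ^ k * ‖V k - F^[k] u₀‖)
    (d := fun k ↦ w⁻¹ ^ (k + 1) * ‖V (k + 1) - F (V k)‖) hθ₀ (fun k ↦ by positivity) he₀ hstep N
  simp only [hV, hweight]
  rwa [Fin.sum_univ_eq_sum_range (fun k ↦ w⁻¹ ^ (k + 1) * ‖V (k + 1) - F^[k + 1] u₀‖),
    Fin.sum_univ_eq_sum_range (fun k ↦ w⁻¹ ^ (k + 1) * ‖V (k + 1) - F (V k)‖)]

/-- Upper-bound half of the norm-equivalence theorem for the proximity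
function: the weighted trajectory error is bounded by the geometric factor
`Σ_{m=0}^{N-1} θ^m` times the weighted sum of interface jumps, where `θ = Λ/w`. -/
theorem proximity_upper_bound
    {E : Type*} [NormedAddCommGroup E] [NormedSpace ℝ E]
    (F : E → E) (Λ : ℝ) (hΛ : 0 ≤ Λ)
    (hF : ∀ x y : E, ‖F x - F y‖ ≤ Λ * ‖x - y‖)
    (w : ℝ) (hw : 0 < w) (θ : ℝ) (hθ : θ = Λ / w)
    (N : ℕ) (hN : 1 ≤ N) (u₀ : E)
    (U : Fin (N + 1) → E) (hU0 : U 0 = u₀) :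
    ∑ n : Fin N, w ^ (-(n.val + 1 : ℤ)) * ‖U n.succ - F^[n.val + 1] u₀‖
      ≤ (∑ m ∈ Finset.range N, θ ^ m) *
        ∑ n : Fin N, w ^ (-(n.val + 1 : ℤ)) * ‖U n.succ - F (U n.castSucc)‖ :=
  proximity_upper_bound_general F Λ hΛ hF w hw θ hθ N u₀ U hU0
end

section
/- Let E be a real normed vector space, ℱ : E → E Lipschitz with constant Λ ≥ 0, w > 0, θ = Λ/w, N ≥ 1, and u₀ ∈ E. Let U : Fin (N+1) → E be a sequence with U(0) = u₀, let U*(n) = ℱ^[n](u₀), define the proximity function ψ(U) = (1/N) Σ_{n=1}^{N} w^{−n} ‖U(n) − ℱ(U(n−1))‖ and the weighted trajectory error ‖U − U*‖_W = Σ_{n=1}^{N} w^{−n} ‖U(n) − U*(n)‖ (the p = 1 weighted norm). Then c · ψ(U) ≤ ‖U − U*‖_W ≤ C_N · ψ(U), where c = 1/(1 + θ) and C_N = N · Σ_{m=0}^{N−1} θ^m (so C_N = N(θ^N − 1)/(θ − 1) when θ ≠ 1 and C_N = N² when θ = 1). -/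
/-!
Write `εₙ = w⁻ⁿ ‖U(n) - U*(n)‖` and `dₙ = w⁻⁽ⁿ⁺¹⁾ ‖U(n+1) - ℱ(U(n))‖`, so that `ε₀ = 0`.
Since `U*(n+1) = ℱ(U*(n))`, the triangle inequality through `ℱ(U(n))` and the Lipschitz bound give
the two recursions `εₙ₊₁ ≤ dₙ + θ εₙ` and `dₙ ≤ εₙ₊₁ + θ εₙ`. Summing the second one gives
`Σ d ≤ (1 + θ) Σ ε`; unrolling the first one over the partial sums gives `Σ ε ≤ (Σ θᵐ) Σ d`.
As `Σ d = N ψ`, both bounds follow.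
-/

open Finset

section Recursion

variable {ε d : ℕ → ℝ} {θ : ℝ}

theorem sum_range_succ_le_geom_sum_mul_sum (hθ : 0 ≤ θ) (hd : ∀ n, 0 ≤ d n) (h0 : ε 0 = 0)
    (h : ∀ n, ε (n + 1) ≤ d n + θ * ε n) (N : ℕ) :
    ∑ n ∈ range N, ε (n + 1) ≤ (∑ m ∈ range N, θ ^ m) * ∑ n ∈ range N, d n := by
  induction N with
  | zero => simp
  | succ N ih =>
    have hD : ∑ n ∈ range N, d n ≤ ∑ n ∈ range (N + 1), d n :=
      sum_le_sum_of_subset_of_nonneg (range_subset_range.2 N.le_succ) fun n _ _ => hd n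
    have hG : 0 ≤ ∑ m ∈ range N, θ ^ m := sum_nonneg fun m _ => pow_nonneg hθ m
    calc ∑ n ∈ range (N + 1), ε (n + 1)
        ≤ ∑ n ∈ range (N + 1), (d n + θ * ε n) := sum_le_sum fun n _ => h n
      _ = ∑ n ∈ range (N + 1), d n + θ * ∑ n ∈ range N, ε (n + 1) := by
        rw [sum_add_distrib, ← mul_sum, sum_range_succ' ε, h0, add_zero]
      _ ≤ ∑ n ∈ range (N + 1), d n
            + θ * ((∑ m ∈ range N, θ ^ m) * ∑ n ∈ range (N + 1), d n) := by
        gcongr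
        exact ih.trans (mul_le_mul_of_nonneg_left hD hG)
      _ = (∑ m ∈ range (N + 1), θ ^ m) * ∑ n ∈ range (N + 1), d n := by
        rw [geom_sum_succ]; ring

theorem sum_range_le_one_add_mul_sum_range_succ (hθ : 0 ≤ θ) (hε : ∀ n, 0 ≤ ε n)
    (h0 : ε 0 = 0) (h : ∀ n, d n ≤ ε (n + 1) + θ * ε n) (N : ℕ) :
    ∑ n ∈ range N, d n ≤ (1 + θ) * ∑ n ∈ range N, ε (n + 1) := by
  have hshift : ∑ n ∈ range N, ε n ≤ ∑ n ∈ range N, ε (n + 1) := by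
    have h := sum_range_succ' ε N
    rw [sum_range_succ, h0, add_zero] at h
    linarith [hε N]
  calc ∑ n ∈ range N, d n
      ≤ ∑ n ∈ range N, (ε (n + 1) + θ * ε n) := sum_le_sum fun n _ => h n
    _ = ∑ n ∈ range N, ε (n + 1) + θ * ∑ n ∈ range N, ε n := by
      rw [sum_add_distrib, mul_sum]
    _ ≤ (1 + θ) * ∑ n ∈ range N, ε (n + 1) := by
      nlinarith [mul_le_mul_of_nonneg_left hshift hθ]

end Recursion

section Trajectory

variable {E : Type*} [NormedAddCommGroup E] {F : E → E} {Λ w : ℝ}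

theorem norm_sub_apply_le_norm_sub_apply_add (hF : ∀ x y : E, ‖F x - F y‖ ≤ Λ * ‖x - y‖)
    (x y z : E) : ‖y - F z‖ ≤ ‖y - F x‖ + Λ * ‖x - z‖ :=
  (norm_sub_le_norm_sub_add_norm_sub y (F x) (F z)).trans (add_le_add le_rfl (hF x z))

theorem zpow_neg_succ_mul_le {a b c : ℝ} (hw : 0 < w) (n : ℕ) (h : a ≤ b + Λ * c) :
    w ^ (-(n + 1 : ℤ)) * a ≤ w ^ (-(n + 1 : ℤ)) * b + Λ / w * (w ^ (-(n : ℤ)) * c) := by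
  have hweight : Λ / w * w ^ (-(n : ℤ)) = w ^ (-(n + 1 : ℤ)) * Λ := by
    rw [neg_add, zpow_add₀ hw.ne', zpow_neg_one]; ring
  rw [← mul_assoc, hweight, mul_assoc, ← mul_add]
  exact mul_le_mul_of_nonneg_left h (zpow_pos hw _).le

variable (F w) (u₀ : E) (V : ℕ → E)

noncomputable def weightedError (n : ℕ) : ℝ := w ^ (-(n : ℤ)) * ‖V n - F^[n] u₀‖

noncomputable def weightedDefect (n : ℕ) : ℝ := w ^ (-(n + 1 : ℤ)) * ‖V (n + 1) - F (V n)‖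

variable {F w u₀ V}

theorem weightedError_zero (hV : V 0 = u₀) : weightedError F w u₀ V 0 = 0 := by
  simp [weightedError, hV]

theorem weightedError_nonneg (hw : 0 < w) (n : ℕ) : 0 ≤ weightedError F w u₀ V n := by
  unfold weightedError; positivity

theorem weightedDefect_nonneg (hw : 0 < w) (n : ℕ) : 0 ≤ weightedDefect F w V n := by
  unfold weightedDefect; positivity

theorem weightedError_succ_le (hF : ∀ x y : E, ‖F x - F y‖ ≤ Λ * ‖x - y‖) (hw : 0 < w)
    (n : ℕ) :
    weightedError F w u₀ V (n + 1)
      ≤ weightedDefect F w V n + Λ / w * weightedError F w u₀ V n := by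
  simp only [weightedError, weightedDefect, Nat.cast_succ, Function.iterate_succ_apply']
  exact zpow_neg_succ_mul_le hw n
    (norm_sub_apply_le_norm_sub_apply_add hF (V n) (V (n + 1)) (F^[n] u₀))

theorem weightedDefect_le (hF : ∀ x y : E, ‖F x - F y‖ ≤ Λ * ‖x - y‖) (hw : 0 < w) (n : ℕ) :
    weightedDefect F w V n
      ≤ weightedError F w u₀ V (n + 1) + Λ / w * weightedError F w u₀ V n := by
  simp only [weightedError, weightedDefect, Nat.cast_succ, Function.iterate_succ_apply',
    norm_sub_rev (V n)]
  exact zpow_neg_succ_mul_le hw n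
    (norm_sub_apply_le_norm_sub_apply_add hF (F^[n] u₀) (V (n + 1)) (V n))

end Trajectory

theorem proximity_norm_equivalence_general
    {E : Type*} [NormedAddCommGroup E] [NormedSpace ℝ E]
    (F : E → E) (Λ : ℝ) (hΛ : 0 ≤ Λ)
    (hF : ∀ x y : E, ‖F x - F y‖ ≤ Λ * ‖x - y‖)
    (w : ℝ) (hw : 0 < w) (θ : ℝ) (hθ : θ = Λ / w)
    (N : ℕ) (u₀ : E)
    (U : Fin (N + 1) → E) (hU0 : U 0 = u₀)
    (ψ errW : ℝ)
    (hψ : ψ = (1 / (N : ℝ)) *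
      ∑ n : Fin N, w ^ (-(n.val + 1 : ℤ)) * ‖U n.succ - F (U n.castSucc)‖)
    (herrW : errW = ∑ n : Fin N, w ^ (-(n.val + 1 : ℤ)) * ‖U n.succ - F^[n.val + 1] u₀‖) :
    (1 / (1 + θ)) * ψ ≤ errW ∧
      errW ≤ ((N : ℝ) * ∑ m ∈ Finset.range N, θ ^ m) * ψ := by
  set V : ℕ → E := fun n => U (Fin.ofNat (N + 1) n)
  have hV : ∀ a : Fin (N + 1), V a = U a := fun a => by simp [V]
  have hV0 : V 0 = u₀ := by simp [V, hU0]
  have hD : ∑ n : Fin N, w ^ (-(n.val + 1 : ℤ)) * ‖U n.succ - F (U n.castSucc)‖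
      = ∑ n ∈ range N, weightedDefect F w V n := by
    rw [← Fin.sum_univ_eq_sum_range]
    refine sum_congr rfl fun n _ => ?_
    rw [weightedDefect, ← hV, ← hV, Fin.val_succ, Fin.val_castSucc]
  have hE : errW = ∑ n ∈ range N, weightedError F w u₀ V (n + 1) := by
    rw [herrW, ← Fin.sum_univ_eq_sum_range (fun n => weightedError F w u₀ V (n + 1))]
    refine sum_congr rfl fun n _ => ?_
    simp only [weightedError, ← hV, Fin.val_succ, Nat.cast_succ]
  rw [hD] at hψ
  have hNψ : N * ψ = ∑ n ∈ range N, weightedDefect F w V n := by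
    rcases eq_or_ne N 0 with rfl | hN
    · simp
    · rw [hψ]; field_simp
  have hψD : ψ ≤ ∑ n ∈ range N, weightedDefect F w V n := by
    rw [hψ, one_div]
    exact mul_le_of_le_one_left (sum_nonneg fun n _ => weightedDefect_nonneg hw n)
      (Nat.cast_inv_le_one N)
  subst hθ
  have hθ0 : 0 ≤ Λ / w := div_nonneg hΛ hw.le
  constructor
  · rw [hE, one_div_mul_eq_div, div_le_iff₀ (by positivity), mul_comm]
    exact hψD.trans <| sum_range_le_one_add_mul_sum_range_succ hθ0 (weightedError_nonneg hw)
      (weightedError_zero hV0) (weightedDefect_le hF hw) N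
  · rw [hE, mul_comm (N : ℝ), mul_assoc, hNψ]
    exact sum_range_succ_le_geom_sum_mul_sum hθ0 (weightedDefect_nonneg hw)
      (weightedError_zero hV0) (weightedError_succ_le hF hw) N

/-- Equivalence of norms for the proximity function `ψ`: with
`c = 1/(1 + θ)` and `C_N = N · Σ_{m=0}^{N-1} θ^m`, the weighted trajectory error
`‖U - U*‖_W` satisfies `c·ψ(U) ≤ ‖U - U*‖_W ≤ C_N·ψ(U)`, where `θ = Λ/w`. -/
theorem proximity_norm_equivalence
    {E : Type*} [NormedAddCommGroup E] [NormedSpace ℝ E]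
    (F : E → E) (Λ : ℝ) (hΛ : 0 ≤ Λ)
    (hF : ∀ x y : E, ‖F x - F y‖ ≤ Λ * ‖x - y‖)
    (w : ℝ) (hw : 0 < w) (θ : ℝ) (hθ : θ = Λ / w)
    (N : ℕ) (hN : 1 ≤ N) (u₀ : E)
    (U : Fin (N + 1) → E) (hU0 : U 0 = u₀)
    (ψ errW : ℝ)
    (hψ : ψ = (1 / (N : ℝ)) *
      ∑ n : Fin N, w ^ (-(n.val + 1 : ℤ)) * ‖U n.succ - F (U n.castSucc)‖)
    (herrW : errW = ∑ n : Fin N, w ^ (-(n.val + 1 : ℤ)) * ‖U n.succ - F^[n.val + 1] u₀‖) :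
    (1 / (1 + θ)) * ψ ≤ errW ∧
      errW ≤ ((N : ℝ) * ∑ m ∈ Finset.range N, θ ^ m) * ψ :=
  proximity_norm_equivalence_general F Λ hΛ hF w hw θ hθ N u₀ U hU0 ψ errW hψ herrW
end
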